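/- Let V be a finite set, Ψ a finite set with weights p : Ψ → ℝ≥0, and for each v ∈ V a subset Ξ_v ⊆ Ψ; set Ψ_X = ⋂_{v ∈ X} Ξ_v. Let W be a finite set, N : V → 2^W a 'domination' map extended to sets by N(X) = ⋃_{v ∈ X} N(v), and for each w ∈ W and ψ ∈ Ψ a predicate conn(w, ψ). Define f(X) = |N(X)| + ∑_{w ∈ W \ N(X)} (1 - ∑_{ψ ∈ Ψ_X : conn(w,ψ)} p(ψ)). If ∑_{ψ ∈ Ψ_X : conn(w,ψ)} p(ψ) ≤ 1 for all X and w, then f is monotone and submodular. -/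
import Mathlib


theorem stmt_3 {V Ψ W : Type*} [Fintype V] [DecidableEq V] [Fintype Ψ] [DecidableEq Ψ]
    [Fintype W] [DecidableEq W]
    (p : Ψ → ℝ) (hp : ∀ ψ, 0 ≤ p ψ)
    (Ξ : V → Finset Ψ)
    (Nmap : V → Finset W)
    (conn : W → Ψ → Prop) [∀ w ψ, Decidable (conn w ψ)]
    (f : Finset V → ℝ)
    (hf : ∀ X : Finset V,
      f X = (X.biUnion Nmap).card +
        ∑ w ∈ Finset.univ \ X.biUnion Nmap,
          (1 - ∑ ψ ∈ (Finset.univ.filter (fun ψ => ∀ v ∈ X, ψ ∈ Ξ v)).filter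
              (fun ψ => conn w ψ), p ψ))
    (hle : ∀ (X : Finset V) (w : W),
      ∑ ψ ∈ (Finset.univ.filter (fun ψ => ∀ v ∈ X, ψ ∈ Ξ v)).filter
          (fun ψ => conn w ψ), p ψ ≤ 1) :
    (∀ X Y : Finset V, X ⊆ Y → f X ≤ f Y) ∧
    (∀ X Y : Finset V, X ⊆ Y → ∀ v : V, v ∉ Y →
      f (insert v Y) - f Y ≤ f (insert v X) - f X) := by
  classical
  set NN : Finset V → Finset W := fun X => X.biUnion Nmap with hNNdef
  set A : Finset V → W → Finset Ψ := fun X w =>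
    (Finset.univ.filter (fun ψ => ∀ v ∈ X, ψ ∈ Ξ v)).filter (fun ψ => conn w ψ) with hAdef
  set q : Finset V → W → ℝ := fun X w => ∑ ψ ∈ A X w, p ψ with hqdef
  have hNNmono : ∀ X Y : Finset V, X ⊆ Y → NN X ⊆ NN Y := by
    intro X Y h
    exact Finset.biUnion_subset_biUnion_of_subset_left _ h
  have hNNins : ∀ (X : Finset V) (v : V) (w : W),
      w ∈ NN (insert v X) ↔ w ∈ Nmap v ∨ w ∈ NN X := by
    intro X v w
    simp [hNNdef, Finset.biUnion_insert]
  have hAsub : ∀ X Y : Finset V, X ⊆ Y → ∀ w, A Y w ⊆ A X w := by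
    intro X Y hXY w ψ hψ
    simp only [hAdef, Finset.mem_filter, Finset.mem_univ, true_and] at hψ ⊢
    exact ⟨fun v hv => hψ.1 v (hXY hv), hψ.2⟩
  have hqmono : ∀ X Y : Finset V, X ⊆ Y → ∀ w, q Y w ≤ q X w := fun X Y h w =>
    Finset.sum_le_sum_of_subset_of_nonneg (hAsub X Y h w) (fun ψ _ _ => hp ψ)
  have hq0 : ∀ X w, 0 ≤ q X w := fun X w => Finset.sum_nonneg fun ψ _ => hp ψ
  have hAins : ∀ (X : Finset V) (v : V) (w : W),
      A (insert v X) w = (A X w).filter (fun ψ => ψ ∈ Ξ v) := by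
    intro X v w
    ext ψ
    simp only [hAdef, Finset.mem_filter, Finset.mem_univ, true_and, Finset.mem_insert]
    constructor
    · rintro ⟨h1, h2⟩
      exact ⟨⟨fun u hu => h1 u (Or.inr hu), h2⟩, h1 v (Or.inl rfl)⟩
    · rintro ⟨⟨h1, h2⟩, h3⟩
      refine ⟨?_, h2⟩
      rintro u (rfl | hu)
      · exact h3
      · exact h1 u hu
  have hqins : ∀ (X : Finset V) (v : V) (w : W),
      q X w - q (insert v X) w = ∑ ψ ∈ (A X w).filter (fun ψ => ψ ∉ Ξ v), p ψ := by
    intro X v w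
    have h := Finset.sum_filter_add_sum_filter_not (A X w) (fun ψ => ψ ∈ Ξ v) p
    simp only [hqdef, hAins X v w]
    linarith
  set g : Finset V → W → ℝ := fun X w => if w ∈ NN X then 0 else q X w with hgdef
  have hfg : ∀ X : Finset V, f X = (Finset.univ.card (α := W) : ℝ) - ∑ w, g X w := by
    intro X
    rw [hf X]
    have hsub : NN X ⊆ Finset.univ := Finset.subset_univ _
    have hsplit : ∑ w ∈ Finset.univ \ NN X, g X w + ∑ w ∈ NN X, g X w = ∑ w, g X w :=
      Finset.sum_sdiff hsub
    have h0 : ∑ w ∈ NN X, g X w = 0 := by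
      apply Finset.sum_eq_zero
      intro w hw
      simp [hgdef, hw]
    have h1 : ∑ w ∈ Finset.univ \ NN X, g X w = ∑ w ∈ Finset.univ \ NN X, q X w := by
      apply Finset.sum_congr rfl
      intro w hw
      simp only [Finset.mem_sdiff] at hw
      simp [hgdef, hw.2]
    have hcard : ((Finset.univ \ NN X).card : ℝ) =
        (Finset.univ.card (α := W) : ℝ) - (NN X).card := by
      rw [Finset.card_sdiff_of_subset hsub]
      have := Finset.card_le_card hsub
      push_cast [Nat.cast_sub this]
      ring
    have h2 : ∑ w ∈ Finset.univ \ NN X, (1 - q X w)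
        = ((Finset.univ \ NN X).card : ℝ) - ∑ w ∈ Finset.univ \ NN X, q X w := by
      rw [Finset.sum_sub_distrib, Finset.sum_const, nsmul_eq_mul, mul_one]
    rw [h2, hcard]
    have : ∑ w, g X w = ∑ w ∈ Finset.univ \ NN X, q X w := by
      rw [← hsplit, h0, h1, add_zero]
    rw [this]
    ring
  -- pointwise submodularity of g
  have hgsub : ∀ (X Y : Finset V), X ⊆ Y → ∀ (v : V) (w : W),
      g Y w - g (insert v Y) w ≤ g X w - g (insert v X) w := by
    intro X Y hXY v w
    have hXiY : w ∈ NN X → w ∈ NN Y := fun h => hNNmono X Y hXY h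
    have hgle : ∀ Z : Finset V, g (insert v Z) w ≤ q Z w := by
      intro Z
      by_cases h : w ∈ NN (insert v Z)
      · simp only [hgdef, h, if_pos]
        exact hq0 Z w
      · simp only [hgdef, h, if_neg, if_false]
        exact hqmono Z (insert v Z) (Finset.subset_insert v Z) w
    by_cases hX : w ∈ NN X
    · have hY : w ∈ NN Y := hXiY hX
      have hiX : w ∈ NN (insert v X) := (hNNins X v w).2 (Or.inr hX)
      have hiY : w ∈ NN (insert v Y) := (hNNins Y v w).2 (Or.inr hY)
      simp [hgdef, hX, hY, hiX, hiY]
    · by_cases hY : w ∈ NN Y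
      · have hiY : w ∈ NN (insert v Y) := (hNNins Y v w).2 (Or.inr hY)
        have : g X w - g (insert v X) w ≥ 0 := by
          have h1 : g X w = q X w := by simp [hgdef, hX]
          have h2 := hgle X
          linarith
        simp only [hgdef, hY, hiY, if_pos]
        linarith
      · by_cases hv : w ∈ Nmap v
        · have hiX : w ∈ NN (insert v X) := (hNNins X v w).2 (Or.inl hv)
          have hiY : w ∈ NN (insert v Y) := (hNNins Y v w).2 (Or.inl hv)
          simp only [hgdef, hX, hY, hiX, hiY, if_pos, if_neg, if_false, sub_zero]
          exact hqmono X Y hXY w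
        · have hiX : w ∉ NN (insert v X) := by
            intro h
            rcases (hNNins X v w).1 h with h | h
            · exact hv h
            · exact hX h
          have hiY : w ∉ NN (insert v Y) := by
            intro h
            rcases (hNNins Y v w).1 h with h | h
            · exact hv h
            · exact hY h
          simp only [hgdef, hX, hY, hiX, hiY, if_neg, if_false]
          rw [hqins X v w, hqins Y v w]
          apply Finset.sum_le_sum_of_subset_of_nonneg
          · exact Finset.filter_subset_filter _ (hAsub X Y hXY w)
          · intro ψ _ _; exact hp ψ
  constructor
  · intro X Y hXY
    rw [hfg X, hfg Y]
    have : ∑ w, g Y w ≤ ∑ w, g X w := by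
      apply Finset.sum_le_sum
      intro w _
      by_cases hY : w ∈ NN Y
      · simp only [hgdef, hY, if_pos]
        by_cases hX : w ∈ NN X
        · simp [hX]
        · simp only [hX, if_neg, if_false]
          exact hq0 X w
      · have hX : w ∉ NN X := fun h => hY (hNNmono X Y hXY h)
        simp only [hgdef, hX, hY, if_neg, if_false]
        exact hqmono X Y hXY w
    linarith
  · intro X Y hXY v _
    rw [hfg X, hfg Y, hfg (insert v X), hfg (insert v Y)]
    have h1 : ∑ w, (g Y w - g (insert v Y) w) ≤ ∑ w, (g X w - g (insert v X) w) :=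
      Finset.sum_le_sum fun w _ => hgsub X Y hXY v w
    rw [Finset.sum_sub_distrib, Finset.sum_sub_distrib] at h1
    linarith
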